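/- Let (f_n) be a sequence of functions f_n : ℝ → [0,∞) such that each f_n is increasing on (−∞,0], decreasing on [0,∞), ∫_ℝ f_n(x) dx = 1, and for every δ > 0, lim_{n→∞} ∫_{[−δ,δ]} f_n(x) dx = 1. If X ⊆ ℝ is a Borel set with 0 ∈ X and 0 a Lebesgue point of χ_X (i.e. lim_{r→0+}(1/(2r))·ℓ(X∩[−r,r]) = 1), then lim_{n→∞} ∫_X f_n(x) dx = 1. -/

import Mathlib

open MeasureTheory Filter Topology Set ENNReal

/-! Every superlevel set `{f > t}` of a function increasing on `(-∞, 0]` and decreasing on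
`[0, ∞)` is an interval through `0`; cut down to `[-δ, δ]` it has some length `v ≤ 2δ` and lies
in `[-v, v]`. When `0` is a Lebesgue point of `X`, for `δ` small this forces
`ℓ({f > t} ∩ [-δ, δ] \ X) ≤ 2ε · ℓ({f > t} ∩ [-δ, δ])` for every `t`, and the layer-cake formula
turns this into `∫_{[-δ, δ] \ X} f ≤ 2ε ∫_{[-δ, δ]} f`. Concentration of `f n` at `0` then gives
`∫_X f n ≥ 1 - 3ε` eventually, while `∫_X f n ≤ 1` always. -/

lemma le_apply_zero_of_monotoneOn_of_antitoneOn {f : ℝ → ℝ} (hmono : MonotoneOn f (Iic 0))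
    (hanti : AntitoneOn f (Ici 0)) (x : ℝ) : f x ≤ f 0 := by
  rcases le_total x 0 with hx | hx
  · exact hmono hx (le_refl (0 : ℝ)) hx
  · exact hanti (le_refl (0 : ℝ)) hx hx

lemma ordConnected_preimage_Ioi_of_monotoneOn_of_antitoneOn {f : ℝ → ℝ}
    (hmono : MonotoneOn f (Iic 0)) (hanti : AntitoneOn f (Ici 0)) (t : ℝ) :
    (f ⁻¹' Ioi t).OrdConnected := by
  refine ⟨fun x hx y hy z hz => ?_⟩
  rcases le_total z 0 with h | h
  · exact lt_of_lt_of_le hx (hmono (hz.1.trans h) h hz.1)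
  · exact lt_of_lt_of_le hy (hanti h (h.trans hz.2) hz.2)

lemma measurable_of_monotoneOn_of_antitoneOn {f : ℝ → ℝ} (hmono : MonotoneOn f (Iic 0))
    (hanti : AntitoneOn f (Ici 0)) : Measurable f :=
  measurable_of_Ioi fun t =>
    (ordConnected_preimage_Ioi_of_monotoneOn_of_antitoneOn hmono hanti t).measurableSet

lemma Set.OrdConnected.subset_Icc_measureReal {I : Set ℝ} (hI : I.OrdConnected) (h0 : 0 ∈ I)
    (hfin : volume I ≠ ∞) : I ⊆ Icc (-volume.real I) (volume.real I) := by
  intro x hx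
  have hx' : ENNReal.ofReal |x| ≤ volume I := by
    simpa [Real.volume_interval] using measure_mono (μ := volume) (hI.uIcc_subset h0 hx)
  exact abs_le.mp ((ENNReal.ofReal_le_iff_le_toReal hfin).mp hx')

lemma volume_inter_le_of_ordConnected {s I : Set ℝ} {R ε : ℝ} (hI : I.OrdConnected) (h0 : 0 ∈ I)
    (hIR : volume I ≤ ENNReal.ofReal R)
    (hs : ∀ r ∈ Ioc 0 R, volume (s ∩ Icc (-r) r) ≤ ENNReal.ofReal (ε * (2 * r))) :
    volume (s ∩ I) ≤ ENNReal.ofReal (2 * ε) * volume I := by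
  have hfin : volume I ≠ ∞ := ne_top_of_le_ne_top ofReal_ne_top hIR
  rcases measureReal_nonneg.eq_or_lt with hv | hv
  · have hI0 : volume I = 0 := by rw [← ofReal_measureReal hfin, ← hv, ENNReal.ofReal_zero]
    exact (measure_mono inter_subset_right).trans (by rw [hI0]; exact zero_le)
  have hvR : volume.real I ≤ R := by
    have := ENNReal.toReal_mono ofReal_ne_top hIR
    rw [ENNReal.toReal_ofReal'] at this
    exact (le_max_iff.mp this).resolve_right hv.not_ge
  calc volume (s ∩ I)
      ≤ volume (s ∩ Icc (-volume.real I) (volume.real I)) :=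
        measure_mono (inter_subset_inter_right _ (hI.subset_Icc_measureReal h0 hfin))
    _ ≤ ENNReal.ofReal (ε * (2 * volume.real I)) :=
        hs _ ⟨hv, hvR⟩
    _ = ENNReal.ofReal (2 * ε) * volume I := by
        rw [← ofReal_measureReal hfin, ← ENNReal.ofReal_mul' hv.le]
        ring_nf

lemma lintegral_ofReal_le_mul_of_meas_lt_le {α : Type*} [MeasurableSpace α] {μ ν : Measure α}
    {f : α → ℝ} (hμ : 0 ≤ᵐ[μ] f) (hν : 0 ≤ᵐ[ν] f) (hfμ : AEMeasurable f μ)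
    (hfν : AEMeasurable f ν) {c : ℝ≥0∞} (hc : c ≠ ∞)
    (h : ∀ t, 0 < t → μ {a | t < f a} ≤ c * ν {a | t < f a}) :
    ∫⁻ a, ENNReal.ofReal (f a) ∂μ ≤ c * ∫⁻ a, ENNReal.ofReal (f a) ∂ν := by
  rw [lintegral_eq_lintegral_meas_lt μ hμ hfμ, lintegral_eq_lintegral_meas_lt ν hν hfν,
    ← lintegral_const_mul' _ _ hc]
  exact setLIntegral_mono' measurableSet_Ioi h

lemma setLIntegral_inter_Icc_le_of_monotoneOn_of_antitoneOn {f : ℝ → ℝ}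
    (hmono : MonotoneOn f (Iic 0)) (hanti : AntitoneOn f (Ici 0)) (hf : ∀ x, 0 ≤ f x)
    {s : Set ℝ} {δ R ε : ℝ} (hδR : 2 * δ ≤ R)
    (hs : ∀ r ∈ Ioc 0 R, volume (s ∩ Icc (-r) r) ≤ ENNReal.ofReal (ε * (2 * r))) :
    ∫⁻ x in s ∩ Icc (-δ) δ, ENNReal.ofReal (f x)
      ≤ ENNReal.ofReal (2 * ε) * ∫⁻ x in Icc (-δ) δ, ENNReal.ofReal (f x) := by
  have hfm := measurable_of_monotoneOn_of_antitoneOn hmono hanti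
  refine lintegral_ofReal_le_mul_of_meas_lt_le (.of_forall hf) (.of_forall hf)
    hfm.aemeasurable hfm.aemeasurable ofReal_ne_top fun t _ => ?_
  have hlevel : MeasurableSet {a | t < f a} := measurableSet_lt measurable_const hfm
  rw [Measure.restrict_apply hlevel, Measure.restrict_apply hlevel,
    inter_left_comm, inter_comm _ (Icc _ _)]
  set I := Icc (-δ) δ ∩ {a | t < f a}
  rcases I.eq_empty_or_nonempty with hI | ⟨x, hxδ, hxt⟩
  · simp [hI]
  have h0 : 0 ∈ I := ⟨⟨by linarith [hxδ.1, hxδ.2], by linarith [hxδ.1, hxδ.2]⟩,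
    hxt.trans_le (le_apply_zero_of_monotoneOn_of_antitoneOn hmono hanti x)⟩
  have hIR : volume I ≤ ENNReal.ofReal R :=
    (measure_mono inter_subset_left).trans (by rw [Real.volume_Icc]; gcongr; linarith)
  exact volume_inter_le_of_ordConnected (ordConnected_Icc.inter
    (ordConnected_preimage_Ioi_of_monotoneOn_of_antitoneOn hmono hanti t)) h0 hIR hs

lemma setIntegral_Icc_sdiff_le_of_monotoneOn_of_antitoneOn {f : ℝ → ℝ}
    (hmono : MonotoneOn f (Iic 0)) (hanti : AntitoneOn f (Ici 0)) (hf : ∀ x, 0 ≤ f x)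
    (hfi : Integrable f) {X : Set ℝ} {δ R ε : ℝ} (hε : 0 ≤ ε) (hδR : 2 * δ ≤ R)
    (hX : ∀ r ∈ Ioc 0 R, volume (Xᶜ ∩ Icc (-r) r) ≤ ENNReal.ofReal (ε * (2 * r))) :
    ∫ x in Icc (-δ) δ \ X, f x ≤ 2 * ε * ∫ x in Icc (-δ) δ, f x := by
  have hfm := measurable_of_monotoneOn_of_antitoneOn hmono hanti
  rw [sdiff_eq_compl_inter,
    integral_eq_lintegral_of_nonneg_ae (.of_forall hf) hfm.aestronglyMeasurable,
    integral_eq_lintegral_of_nonneg_ae (.of_forall hf) hfm.aestronglyMeasurable,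
    ← ENNReal.toReal_ofReal (by positivity : 0 ≤ 2 * ε), ← ENNReal.toReal_mul]
  exact ENNReal.toReal_mono (mul_ne_top ofReal_ne_top hfi.integrableOn.lintegral_lt_top.ne)
    (setLIntegral_inter_Icc_le_of_monotoneOn_of_antitoneOn hmono hanti hf hδR hX)

lemma exists_volume_compl_inter_Icc_le {X : Set ℝ} (hX : MeasurableSet X)
    (hleb : Tendsto (fun r : ℝ => (volume (X ∩ Icc (-r) r)).toReal / (2 * r)) (𝓝[>] 0) (𝓝 1))
    {ε : ℝ} (hε : 0 < ε) :
    ∃ R > 0, ∀ r ∈ Ioc 0 R, volume (Xᶜ ∩ Icc (-r) r) ≤ ENNReal.ofReal (ε * (2 * r)) := by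
  obtain ⟨R, hR, hsub⟩ :=
    mem_nhdsGT_iff_exists_Ioc_subset.mp (hleb (Ioi_mem_nhds (sub_lt_self 1 hε)))
  refine ⟨R, hR, fun r hr => ?_⟩
  have hratio : (1 - ε) * (2 * r) < volume.real (X ∩ Icc (-r) r) :=
    (lt_div_iff₀ (by linarith [hr.1])).mp (hsub hr)
  have hsplit :=
    measureReal_inter_add_sdiff (μ := volume) (s := Icc (-r) r) hX measure_Icc_lt_top.ne
  rw [Real.volume_real_Icc, max_eq_left (by linarith [hr.1]), inter_comm] at hsplit
  rw [← sdiff_eq_compl_inter, ENNReal.le_ofReal_iff_toReal_le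
    ((measure_mono sdiff_subset).trans_lt measure_Icc_lt_top).ne (by nlinarith [hr.1])]
  change volume.real _ ≤ _
  linarith

theorem stmt2 (f : ℕ → ℝ → ℝ) (hpos : ∀ n x, 0 ≤ f n x)
    (hmono₁ : ∀ n, ∀ x y : ℝ, x ≤ y → y ≤ 0 → f n x ≤ f n y)
    (hmono₂ : ∀ n, ∀ x y : ℝ, 0 ≤ x → x ≤ y → f n y ≤ f n x)
    (hint : ∀ n, ∫ x : ℝ, f n x = 1)
    (hconc : ∀ δ : ℝ, 0 < δ →
      Tendsto (fun n => ∫ x in Set.Icc (-δ) δ, f n x) atTop (𝓝 1))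
    (X : Set ℝ) (hX : MeasurableSet X)
    (hleb : Tendsto (fun r : ℝ => (volume (X ∩ Set.Icc (-r) r)).toReal / (2 * r))
      (𝓝[>] (0 : ℝ)) (𝓝 1)) :
    Tendsto (fun n => ∫ x in X, f n x) atTop (𝓝 1) := by
  have hmono : ∀ n, MonotoneOn (f n) (Iic 0) := fun n x _ y hy hxy => hmono₁ n x y hxy hy
  have hanti : ∀ n, AntitoneOn (f n) (Ici 0) := fun n x hx y _ hxy => hmono₂ n x y hx hxy
  have hfi : ∀ n, Integrable (f n) := fun n => .of_integral_ne_zero (by simp [hint n])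
  have hle_one : ∀ n s, ∫ x in s, f n x ≤ 1 := fun n s =>
    (setIntegral_le_integral (hfi n) (.of_forall (hpos n))).trans (hint n).le
  refine tendsto_order.2
    ⟨fun a ha => ?_, fun a ha => .of_forall fun n => (hle_one n X).trans_lt ha⟩
  obtain ⟨ε, hε, rfl⟩ : ∃ ε > 0, a = 1 - 3 * ε := ⟨(1 - a) / 3, by linarith, by ring⟩
  obtain ⟨R, hR, hXR⟩ := exists_volume_compl_inter_Icc_le hX hleb hε
  filter_upwards [(hconc (R / 2) (by positivity)).eventually (lt_mem_nhds (sub_lt_self 1 hε))]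
    with n hn
  have hsdiff := setIntegral_Icc_sdiff_le_of_monotoneOn_of_antitoneOn (hmono n) (hanti n)
    (hpos n) (hfi n) (δ := R / 2) hε.le (by linarith) hXR
  have hsplit := integral_inter_add_sdiff hX (hfi n).integrableOn (s := Icc (-(R / 2)) (R / 2))
  have hinter : ∫ x in Icc (-(R / 2)) (R / 2) ∩ X, f n x ≤ ∫ x in X, f n x :=
    setIntegral_mono_set (hfi n).integrableOn (.of_forall (hpos n))
      inter_subset_right.eventuallyLE
  nlinarith [hle_one n (Icc (-(R / 2)) (R / 2))]
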